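/- Let W be a 4-dimensional linear subspace of ℝ⁷ containing a 3-dimensional linear subspace that is closed under the cross product determined by φ₀. Then W is Type-I 2-coisotropic, i.e. W_I^{⊥,2} ⊆ W; in fact W_I^{⊥,2} is 1-dimensional. -/

import Mathlib

open Module

/-- The exterior 3-form `dxᵃ ∧ dxᵇ ∧ dxᶜ` on `ℝ⁷`. -/
noncomputable def dx3 (a b c : Fin 7) : (Fin 7 → ℝ) [⋀^Fin 3]→ₗ[ℝ] ℝ :=
  (Matrix.detRowAlternating : (Fin 3 → ℝ) [⋀^Fin 3]→ₗ[ℝ] ℝ).compLinearMap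
    (LinearMap.funLeft ℝ ℝ ![a, b, c])

/-- The standard `G₂` 3-form
`φ₀ = dx¹²³ + dx¹⁴⁵ + dx¹⁶⁷ + dx²⁴⁶ − dx²⁵⁷ − dx³⁴⁷ − dx³⁵⁶` on `ℝ⁷`
(with indices shifted to `0, …, 6`). -/
noncomputable def phi0 : (Fin 7 → ℝ) [⋀^Fin 3]→ₗ[ℝ] ℝ :=
  dx3 0 1 2 + dx3 0 3 4 + dx3 0 5 6 + dx3 1 3 5 - dx3 1 4 6 - dx3 2 3 6 - dx3 2 4 5

/-- The Type-I 1st orthogonal complement of `W ⊆ ℝ⁷` with respect to `φ₀`. -/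
def WIperp1 (W : Submodule ℝ (Fin 7 → ℝ)) : Set (Fin 7 → ℝ) :=
  {v | ∀ w ∈ W, ∀ u : Fin 7 → ℝ, phi0 ![v, w, u] = 0}

/-- The Type-I 2nd orthogonal complement of `W ⊆ ℝ⁷` with respect to `φ₀`. -/
def WIperp2 (W : Submodule ℝ (Fin 7 → ℝ)) : Set (Fin 7 → ℝ) :=
  {v | ∀ w₁ ∈ W, ∀ w₂ ∈ W, phi0 ![v, w₁, w₂] = 0}

/-- `U` is closed under the cross product determined by `φ₀`: for all `u, v ∈ U`
and every `z` orthogonal to `U` (w.r.t. the standard inner product),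
`φ₀ (u, v, z) = 0`, i.e. `u × v ∈ U`. -/
def CrossClosed (U : Submodule ℝ (Fin 7 → ℝ)) : Prop :=
  ∀ u ∈ U, ∀ v ∈ U, ∀ z : Fin 7 → ℝ, (∀ x ∈ U, ∑ i, z i * x i = 0) → phi0 ![u, v, z] = 0

/-!
Write `W = U ⊕ ℝ n` with `n ⊥ U`. The only property of the cross product needed is
`u × (u × v) = ⟨u, v⟩ u - |u|² v`. It shows that an associative `U` satisfies `U × U = U`, and
that `u ↦ u × n` is injective on `U`, hence maps `U` onto the 3-dimensional `W^⊥`.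
If `φ₀(v, W, W) = 0`, then `v` is orthogonal to `U × U = U` and to `U × n = W^⊥`, so
`v ∈ W ∩ U^⊥ = ℝ n`. Conversely `φ₀(n, u₁ + a n, u₂ + b n) = ⟨u₁ × u₂, n⟩ = 0`.
So `W_I^{⊥,2} = ℝ n`.
-/

open Module Matrix

section AlternatingThreeForm

variable {R M N : Type*} [CommRing R] [AddCommGroup M] [Module R M] [AddCommGroup N] [Module R N]
  (f : M [⋀^Fin 3]→ₗ[R] N)

theorem AlternatingMap.map_vecCons_rotate (u v w : M) : f ![u, v, w] = f ![v, w, u] := by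
  have h₁ : ![u, v, w] ∘ Equiv.swap 0 1 = ![v, u, w] := by
    ext i; fin_cases i <;> rfl
  have h₂ : ![v, u, w] ∘ Equiv.swap 1 2 = ![v, w, u] := by
    ext i; fin_cases i <;> rfl
  rw [← h₂, f.map_swap _ (by decide), ← h₁, f.map_swap _ (by decide), neg_neg]

theorem AlternatingMap.map_vecCons_add_smul_self (n u v : M) (a b : R) :
    f ![n, u + a • n, v + b • n] = f ![n, u, v] := by
  rw [map_vecCons_rotate, map_vecCons_add, map_vecCons_smul, map_vecCons_rotate,
    map_vecCons_add, map_vecCons_smul, f.map_eq_zero_of_eq ![n, n, u] (i := 0) (j := 1) rfl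
      (by decide), f.map_eq_zero_of_eq ![n, v + b • n, n] (i := 0) (j := 2) rfl (by decide),
    map_vecCons_rotate f v]
  simp

end AlternatingThreeForm

abbrev dotProductForm (ι : Type*) [Fintype ι] : LinearMap.BilinForm ℝ (ι → ℝ) :=
  dotProductBilin ℝ ℝ

section DotProduct

variable {ι : Type*} [Fintype ι]

@[simp] theorem dotProductForm_apply (x y : ι → ℝ) : dotProductForm ι x y = x ⬝ᵥ y := rfl

theorem dotProductForm_isRefl : (dotProductForm ι).IsRefl := fun x y h => by
  rwa [dotProductForm_apply, dotProduct_comm] at h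

theorem dotProductForm_nondegenerate : (dotProductForm ι).Nondegenerate :=
  dotProductForm_isRefl.nondegenerate_iff_separatingLeft.mpr fun x hx =>
    dotProduct_self_eq_zero.mp (hx x)

theorem inf_orthogonal_dotProductForm_eq_bot (K : Submodule ℝ (ι → ℝ)) :
    K ⊓ (dotProductForm ι).orthogonal K = ⊥ :=
  eq_bot_iff.mpr fun x ⟨hxK, hx⟩ => dotProduct_self_eq_zero.mp (hx x hxK)

theorem inf_orthogonal_dotProductForm_ne_bot_of_finrank_lt {K L : Submodule ℝ (ι → ℝ)}
    (h : finrank ℝ L < finrank ℝ K) : K ⊓ (dotProductForm ι).orthogonal L ≠ ⊥ := by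
  rw [← Submodule.one_le_finrank_iff]
  have h₁ := Submodule.finrank_sup_add_finrank_inf_eq K ((dotProductForm ι).orthogonal L)
  have h₂ := Submodule.finrank_le (K ⊔ (dotProductForm ι).orthogonal L)
  have h₃ := Submodule.finrank_le L
  rw [LinearMap.BilinForm.finrank_orthogonal dotProductForm_nondegenerate] at h₁
  omega

variable {U : Submodule ℝ (ι → ℝ)} {n : ι → ℝ}

theorem finrank_sup_span_singleton_of_mem_orthogonal (hn : n ∈ (dotProductForm ι).orthogonal U)
    (hn₀ : n ≠ 0) : finrank ℝ ↥(U ⊔ ℝ ∙ n) = finrank ℝ U + 1 := by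
  have hdisj : U ⊓ ℝ ∙ n = ⊥ := eq_bot_iff.mpr <|
    (inf_le_inf_left U ((Submodule.span_singleton_le_iff_mem n _).mpr hn)).trans_eq
      (inf_orthogonal_dotProductForm_eq_bot U)
  have := Submodule.finrank_sup_add_finrank_inf_eq U (ℝ ∙ n)
  rwa [hdisj, finrank_bot, add_zero, finrank_span_singleton hn₀] at this

theorem sup_span_singleton_inf_orthogonal (hn : n ∈ (dotProductForm ι).orthogonal U) :
    (U ⊔ ℝ ∙ n) ⊓ (dotProductForm ι).orthogonal U = ℝ ∙ n := by
  rw [sup_comm, sup_inf_assoc_of_le _ ((Submodule.span_singleton_le_iff_mem n _).mpr hn),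
    inf_orthogonal_dotProductForm_eq_bot, sup_bot_eq]

theorem exists_eq_sup_span_singleton_of_finrank_eq_add_one {W : Submodule ℝ (ι → ℝ)}
    (hUW : U ≤ W) (hW : finrank ℝ W = finrank ℝ U + 1) :
    ∃ n ∈ (dotProductForm ι).orthogonal U, n ≠ 0 ∧ W = U ⊔ ℝ ∙ n := by
  obtain ⟨n, ⟨hnW, hn⟩, hn₀⟩ := Submodule.exists_mem_ne_zero_of_ne_bot
    (inf_orthogonal_dotProductForm_ne_bot_of_finrank_lt (K := W) (L := U) (by omega))
  refine ⟨n, hn, hn₀, (Submodule.eq_of_le_of_finrank_le ?_ ?_).symm⟩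
  · exact sup_le hUW ((Submodule.span_singleton_le_iff_mem n W).mpr hnW)
  · rw [finrank_sup_span_singleton_of_mem_orthogonal hn hn₀, hW]

end DotProduct

noncomputable def cross (u v : Fin 7 → ℝ) : Fin 7 → ℝ := fun i => phi0 ![u, v, Pi.single i 1]

theorem phi0_apply_eq_cross_dotProduct (u v w : Fin 7 → ℝ) :
    phi0 ![u, v, w] = cross u v ⬝ᵥ w := by
  let g : (Fin 7 → ℝ) →ₗ[ℝ] ℝ := phi0.toMultilinearMap.toLinearMap ![w, u, v] 0
  have hg (x : Fin 7 → ℝ) : g x = phi0 ![x, u, v] :=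
    congrArg phi0 (Fin.update_cons_zero _ _ _)
  calc phi0 ![u, v, w] = g (∑ i, w i • Pi.single i 1) := by
        rw [← pi_eq_sum_univ', hg, phi0.map_vecCons_rotate u, phi0.map_vecCons_rotate v]
    _ = cross u v ⬝ᵥ w := by
        rw [map_sum, dotProduct]
        refine Finset.sum_congr rfl fun i _ => ?_
        rw [map_smul, hg, smul_eq_mul, mul_comm, cross, phi0.map_vecCons_rotate (Pi.single i 1)]

theorem dx3_apply (a b c : Fin 7) (u v w : Fin 7 → ℝ) :
    dx3 a b c ![u, v, w] = u a * v b * w c - u a * v c * w b - u b * v a * w c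
      + u b * v c * w a + u c * v a * w b - u c * v b * w a := by
  show Matrix.det (Matrix.of fun i => ![u, v, w] i ∘ ![a, b, c]) = _
  simp [Matrix.det_fin_three]

theorem cross_cross_self (u v : Fin 7 → ℝ) :
    cross u (cross u v) = (u ⬝ᵥ v) • u - (u ⬝ᵥ u) • v := by
  ext k
  fin_cases k <;> simp [cross, phi0, dx3_apply, dotProduct, Fin.sum_univ_seven] <;> ring

noncomputable def crossRight (n : Fin 7 → ℝ) : (Fin 7 → ℝ) →ₗ[ℝ] (Fin 7 → ℝ) where
  toFun u := cross u n
  map_add' u v := funext fun _ => phi0.map_vecCons_add _ u v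
  map_smul' c u := funext fun _ => phi0.map_vecCons_smul _ c u

@[simp] theorem crossRight_apply (n u : Fin 7 → ℝ) : crossRight n u = cross u n := rfl

theorem cross_zero_right (u : Fin 7 → ℝ) : cross u 0 = 0 :=
  funext fun _ => phi0.map_coord_zero 1 rfl

theorem eq_zero_of_cross_eq_zero {u n : Fin 7 → ℝ} (hn : n ≠ 0) (hun : u ⬝ᵥ n = 0)
    (h : cross u n = 0) : u = 0 := by
  have := cross_cross_self u n
  rw [h, cross_zero_right, hun, zero_smul, zero_sub, eq_comm, neg_eq_zero,
    smul_eq_zero] at this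
  exact dotProduct_self_eq_zero.mp (this.resolve_right hn)

section CrossClosed

variable {U : Submodule ℝ (Fin 7 → ℝ)}

theorem CrossClosed.cross_mem (hU : CrossClosed U) {u v : Fin 7 → ℝ} (hu : u ∈ U) (hv : v ∈ U) :
    cross u v ∈ U := by
  rw [← LinearMap.BilinForm.orthogonal_orthogonal dotProductForm_nondegenerate
    dotProductForm_isRefl U]
  intro z hz
  rw [dotProductForm_apply, dotProduct_comm, ← phi0_apply_eq_cross_dotProduct]
  exact hU u hu v hv z fun x hx => (dotProduct_comm z x).trans (hz x hx)

theorem CrossClosed.exists_cross_eq (hU : CrossClosed U) (hU₂ : 2 ≤ finrank ℝ U) {x : Fin 7 → ℝ}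
    (hx : x ∈ U) : ∃ u ∈ U, ∃ y ∈ U, cross u y = x := by
  have hx₁ : finrank ℝ ↥(ℝ ∙ x) < finrank ℝ U := by
    have := finrank_span_le_card (R := ℝ) ({x} : Set (Fin 7 → ℝ))
    rw [Set.toFinset_singleton, Finset.card_singleton] at this
    omega
  obtain ⟨u, ⟨huU, hu_perp⟩, hu₀⟩ := Submodule.exists_mem_ne_zero_of_ne_bot
    (inf_orthogonal_dotProductForm_ne_bot_of_finrank_lt hx₁)
  have hux : u ⬝ᵥ x = 0 := dotProduct_comm u x ▸ hu_perp x (Submodule.mem_span_singleton_self x)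
  refine ⟨-(u ⬝ᵥ u)⁻¹ • u, U.smul_mem _ huU, cross u x, hU.cross_mem huU hx, ?_⟩
  rw [← crossRight_apply, map_smul, crossRight_apply, cross_cross_self, hux, zero_smul, zero_sub,
    smul_neg, neg_smul, neg_neg, smul_smul, inv_mul_cancel₀ (mt dotProduct_self_eq_zero.mp hu₀),
    one_smul]

variable {n : Fin 7 → ℝ}

theorem mem_WIperp2_sup_span_singleton (hU : CrossClosed U)
    (hn : n ∈ (dotProductForm (Fin 7)).orthogonal U) : n ∈ WIperp2 (U ⊔ ℝ ∙ n) := by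
  intro w₁ hw₁ w₂ hw₂
  obtain ⟨u₁, hu₁, _, hc₁, rfl⟩ := Submodule.mem_sup.mp hw₁
  obtain ⟨c₁, rfl⟩ := Submodule.mem_span_singleton.mp hc₁
  obtain ⟨u₂, hu₂, _, hc₂, rfl⟩ := Submodule.mem_sup.mp hw₂
  obtain ⟨c₂, rfl⟩ := Submodule.mem_span_singleton.mp hc₂
  rw [phi0.map_vecCons_add_smul_self, phi0.map_vecCons_rotate, phi0_apply_eq_cross_dotProduct]
  exact hn _ (hU.cross_mem hu₁ hu₂)

theorem orthogonal_sup_span_singleton_eq_map_crossRight (hU : CrossClosed U)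
    (hU₃ : finrank ℝ U = 3) (hn : n ∈ (dotProductForm (Fin 7)).orthogonal U) (hn₀ : n ≠ 0) :
    (dotProductForm (Fin 7)).orthogonal (U ⊔ ℝ ∙ n) = U.map (crossRight n) := by
  have hinj : Function.Injective ((crossRight n).domRestrict U) := by
    rw [← LinearMap.ker_eq_bot, eq_bot_iff]
    rintro ⟨u, hu⟩ h
    exact Subtype.ext (eq_zero_of_cross_eq_zero hn₀ (hn u hu) h)
  have hle : U.map (crossRight n) ≤ (dotProductForm (Fin 7)).orthogonal (U ⊔ ℝ ∙ n) := by
    rintro _ ⟨u, hu, rfl⟩ w hw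
    rw [dotProductForm_apply, crossRight_apply, dotProduct_comm, ← phi0_apply_eq_cross_dotProduct,
      phi0.map_vecCons_rotate]
    exact mem_WIperp2_sup_span_singleton hU hn w hw u (Submodule.mem_sup_left hu)
  refine (Submodule.eq_of_le_of_finrank_le hle ?_).symm
  rw [LinearMap.BilinForm.finrank_orthogonal dotProductForm_nondegenerate,
    finrank_sup_span_singleton_of_mem_orthogonal hn hn₀, ← LinearMap.range_domRestrict,
    LinearMap.finrank_range_of_inj hinj, hU₃, finrank_fin_fun]

theorem WIperp2_sup_span_singleton (hU : CrossClosed U) (hU₃ : finrank ℝ U = 3)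
    (hn : n ∈ (dotProductForm (Fin 7)).orthogonal U) (hn₀ : n ≠ 0) :
    WIperp2 (U ⊔ ℝ ∙ n) = ℝ ∙ n := by
  apply subset_antisymm
  · intro v hv
    have hvU : v ∈ (dotProductForm (Fin 7)).orthogonal U := by
      intro x hx
      obtain ⟨u, hu, y, hy, rfl⟩ := hU.exists_cross_eq (by omega) hx
      rw [dotProductForm_apply, ← phi0_apply_eq_cross_dotProduct, phi0.map_vecCons_rotate,
        phi0.map_vecCons_rotate]
      exact hv u (Submodule.mem_sup_left hu) y (Submodule.mem_sup_left hy)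
    have hvW : v ∈ U ⊔ ℝ ∙ n := by
      rw [← LinearMap.BilinForm.orthogonal_orthogonal dotProductForm_nondegenerate
        dotProductForm_isRefl (U ⊔ ℝ ∙ n),
        orthogonal_sup_span_singleton_eq_map_crossRight hU hU₃ hn hn₀]
      rintro _ ⟨u, hu, rfl⟩
      rw [dotProductForm_apply, crossRight_apply, ← phi0_apply_eq_cross_dotProduct,
        phi0.map_vecCons_rotate, phi0.map_vecCons_rotate]
      exact hv u (Submodule.mem_sup_left hu) n
        (Submodule.mem_sup_right (Submodule.mem_span_singleton_self n))
    rw [SetLike.mem_coe, ← sup_span_singleton_inf_orthogonal hn]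
    exact ⟨hvW, hvU⟩
  · intro v hv w₁ hw₁ w₂ hw₂
    obtain ⟨c, rfl⟩ := Submodule.mem_span_singleton.mp hv
    rw [phi0.map_vecCons_smul, mem_WIperp2_sup_span_singleton hU hn w₁ hw₁ w₂ hw₂, smul_zero]

end CrossClosed

/-- if `W` is a 4-dimensional subspace of `ℝ⁷` containing a 3-dimensional
subspace closed under the cross product determined by `φ₀`, then `W` is Type-I
2-coisotropic (`W_I^{⊥,2} ⊆ W`); in fact `W_I^{⊥,2}` is 1-dimensional. -/
theorem g2_dim_four_with_associative_coisotropic (W : Submodule ℝ (Fin 7 → ℝ))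
    (hW : Module.finrank ℝ W = 4)
    (hsub : ∃ U : Submodule ℝ (Fin 7 → ℝ), U ≤ W ∧ Module.finrank ℝ U = 3 ∧ CrossClosed U) :
    WIperp2 W ⊆ (W : Set (Fin 7 → ℝ)) ∧
    ∃ L : Submodule ℝ (Fin 7 → ℝ), Module.finrank ℝ L = 1 ∧
      WIperp2 W = (L : Set (Fin 7 → ℝ)) := by
  obtain ⟨U, hUW, hU₃, hU⟩ := hsub
  obtain ⟨n, hn, hn₀, rfl⟩ :=
    exists_eq_sup_span_singleton_of_finrank_eq_add_one hUW (by rw [hW, hU₃])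
  rw [WIperp2_sup_span_singleton hU hU₃ hn hn₀]
  exact ⟨(Submodule.span_singleton_le_iff_mem n _).mpr
    (Submodule.mem_sup_right (Submodule.mem_span_singleton_self n)),
    ℝ ∙ n, finrank_span_singleton hn₀, rfl⟩
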